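/- arXiv:math/0301284 — 2 statements merged into one kernel-verified Lean document; each statement's English description precedes it below -/
import Mathlib

section
/- (Backtracking lemma) Let u_0, …, u_n be points of a tree T such that (1) u_i ≠ u_{i+1} for all 0 ≤ i ≤ n−1; (2) for each 1 ≤ i ≤ n−1, the intersection [u_{i−1}, u_i] ∩ [u_i, u_{i+1}] is strictly contained in [u_{i−1}, u_i] and strictly contained in [u_i, u_{i+1}]; (3) for each 1 ≤ i ≤ n−2, [u_{i−1}, u_i] ∩ [u_i, u_{i+1}] ∩ [u_{i+1}, u_{i+2}] = ∅. Then for all i, j with |j − i| ≥ 2, the arcs [u_{i−1}, u_i] and [u_{j−1}, u_j] are disjoint. -/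
/-!
Write `A k = [u (k-1), u k]`. If `p ∈ A i ∩ A j` with `i + 2 ≤ j`, the median `m` of
`u i`, `u (j-1)` and `p` lies in `A i` and `A j` (arcs are subtrees) and on `[u i, u (j-1)]`,
which is covered by the intermediate arcs `A (i+1), …, A (j-1)`. If `m ∈ A k` with `k ≥ i + 2`,
or `m ∈ A (i+1)` with `j ≥ i + 3`, a pair of closer arcs meets; otherwise `j = i + 2` and `m`
lies in the triple intersection `A i ∩ A (i+1) ∩ A (i+2)`, which is empty. Induction on `j - i`
concludes.
-/

open SimpleGraph

/-- The set of vertices on the unique path between two vertices of a tree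
(the geodesic arc `[x,y]`). -/
noncomputable def seg {V : Type*} {T : SimpleGraph V} (hT : T.IsTree) (x y : V) : Set V :=
  {z | z ∈ ((hT.existsUnique_path x y).exists.choose).support}

/-- A set of vertices is convex (a subtree) if it contains the arc between
any two of its points. -/
def IsSubtree {V : Type*} {T : SimpleGraph V} (hT : T.IsTree) (S : Set V) : Prop :=
  ∀ x ∈ S, ∀ y ∈ S, seg hT x y ⊆ S

namespace SimpleGraph.IsTree

variable {V : Type*} {T : SimpleGraph V} (hT : T.IsTree)
include hT

theorem seg_eq_support {x y : V} {p : T.Walk x y} (hp : p.IsPath) :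
    seg hT x y = {z | z ∈ p.support} := by
  have h := hT.existsUnique_path x y
  simp [seg, h.unique h.exists.choose_spec hp]

theorem left_mem_seg (x y : V) : x ∈ seg hT x y := Walk.start_mem_support _

theorem right_mem_seg (x y : V) : y ∈ seg hT x y := Walk.end_mem_support _

theorem seg_comm (x y : V) : seg hT x y = seg hT y x := by
  have h := hT.existsUnique_path y x
  rw [hT.seg_eq_support h.exists.choose_spec.reverse]
  ext z
  simp [seg, Walk.support_reverse]

theorem seg_of_adj {x y : V} (h : T.Adj x y) : seg hT x y = {x, y} := by
  ext z
  simp [hT.seg_eq_support h.isPath_toWalk]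

theorem seg_subset_support {x y : V} (w : T.Walk x y) : seg hT x y ⊆ {z | z ∈ w.support} := by
  classical
  rw [hT.seg_eq_support w.bypass_isPath]
  exact fun _ hz => w.support_bypass_subset_support hz

theorem seg_subset_union (x c y : V) : seg hT x y ⊆ seg hT x c ∪ seg hT c y := by
  intro z hz
  have := hT.seg_subset_support
    ((hT.existsUnique_path x c).exists.choose.append (hT.existsUnique_path c y).exists.choose) hz
  simp only [Set.mem_ofPred_eq, Walk.mem_support_append_iff] at this
  exact this

theorem seg_subset_of_mem {x y a : V} (ha : a ∈ seg hT x y) : seg hT a y ⊆ seg hT x y := by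
  classical
  have hp := (hT.existsUnique_path x y).exists.choose_spec
  rw [hT.seg_eq_support (hp.dropUntil ha)]
  exact fun _ hz => Walk.support_dropUntil_subset_support _ ha hz

theorem isSubtree_seg (x y : V) : IsSubtree hT (seg hT x y) := by
  have seg_subset_of_mem' {x y b : V} (hb : b ∈ seg hT x y) : seg hT x b ⊆ seg hT x y := by
    rw [hT.seg_comm x b, hT.seg_comm x y] at *
    exact hT.seg_subset_of_mem hb
  intro a ha b hb
  rcases hT.seg_subset_union x a y hb with hb' | hb'
  · rw [hT.seg_comm]
    exact (hT.seg_subset_of_mem hb').trans (seg_subset_of_mem' ha)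
  · exact (seg_subset_of_mem' hb').trans (hT.seg_subset_of_mem ha)

theorem mem_seg_of_adj_of_notMem {x y z : V} (h : T.Adj x y) (hy : y ∉ seg hT x z) :
    x ∈ seg hT y z := by
  have hyz := (hT.existsUnique_path z y).exists.choose_spec
  have hxz := (hT.existsUnique_path z x).exists.choose_spec
  rw [hT.seg_comm] at hy ⊢
  rw [hT.seg_eq_support hxz] at hy
  rw [hT.seg_eq_support hyz]
  exact hT.isAcyclic.mem_support_of_ne_mem_support_of_adj_of_isPath hyz hxz h.symm hy

theorem exists_mem_support_mem_seg_mem_seg {x y : V} (w : T.Walk x y) (z : V) :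
    ∃ m ∈ w.support, m ∈ seg hT x z ∧ m ∈ seg hT y z := by
  induction w with
  | nil => exact ⟨_, Walk.start_mem_support _, hT.left_mem_seg _ _, hT.left_mem_seg _ _⟩
  | @cons x x' y h w ih =>
    obtain ⟨m, hmw, hmx', hmy⟩ := ih
    by_cases hmx : m ∈ seg hT x z
    · exact ⟨m, by simp [hmw], hmx, hmy⟩
    -- `[x', z] ⊆ {x'} ∪ [x, z]`, so the only way `m` can leave `[x, z]` is `m = x'`.
    have hm : m = x' := by
      rcases hT.seg_subset_union x' x z hmx' with hm | hm
      · rw [hT.seg_of_adj h.symm] at hm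
        rcases hm with rfl | rfl
        · rfl
        · exact absurd (hT.left_mem_seg _ z) hmx
      · exact absurd hm hmx
    subst hm
    exact ⟨x, by simp, hT.left_mem_seg x z,
      hT.seg_subset_of_mem hmy (hT.mem_seg_of_adj_of_notMem h hmx)⟩

theorem exists_median (x y z : V) :
    ∃ m, m ∈ seg hT x y ∧ m ∈ seg hT y z ∧ m ∈ seg hT z x := by
  obtain ⟨m, hm, hmx, hmy⟩ := hT.exists_mem_support_mem_seg_mem_seg
    (hT.existsUnique_path x y).exists.choose z
  exact ⟨m, hm, hmy, hT.seg_comm x z ▸ hmx⟩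

theorem seg_subset_biUnion (u : ℕ → V) {a b : ℕ} (hab : a < b) :
    seg hT (u a) (u b) ⊆ ⋃ k ∈ Set.Ico a b, seg hT (u k) (u (k + 1)) := by
  induction b, hab using Nat.le_induction with
  | base => exact Set.subset_biUnion_of_mem (u := fun k => seg hT (u k) (u (k + 1))) (by simp)
  | succ b hab ih =>
    refine (hT.seg_subset_union _ (u b) _).trans (Set.union_subset (ih.trans ?_) ?_)
    · exact Set.biUnion_mono (Set.Ico_subset_Ico_right b.le_succ) fun _ _ => le_rfl
    · exact Set.subset_biUnion_of_mem (u := fun k => seg hT (u k) (u (k + 1))) (by simp; omega)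

end SimpleGraph.IsTree

theorem disjoint_seg_of_add_two_le {V : Type*} {T : SimpleGraph V} (hT : T.IsTree) {n : ℕ}
    {u : ℕ → V} (h3 : ∀ i, i + 3 ≤ n →
      seg hT (u i) (u (i + 1)) ∩ seg hT (u (i + 1)) (u (i + 2)) ∩
        seg hT (u (i + 2)) (u (i + 3)) = ∅)
    {i j : ℕ} (hij : i + 2 ≤ j) (hjn : j + 1 ≤ n) :
    Disjoint (seg hT (u i) (u (i + 1))) (seg hT (u j) (u (j + 1))) := by
  induction hd : j - i using Nat.strong_induction_on generalizing i j with
  | _ d ih =>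
    rw [Set.disjoint_left]
    intro p hpi hpj
    obtain ⟨m, hm, hmj, hmi⟩ := hT.exists_median (u (i + 1)) (u j) p
    replace hmi : m ∈ seg hT (u i) (u (i + 1)) :=
      hT.isSubtree_seg _ _ p hpi _ (hT.right_mem_seg _ _) hmi
    replace hmj : m ∈ seg hT (u j) (u (j + 1)) :=
      hT.isSubtree_seg _ _ _ (hT.left_mem_seg _ _) p hpj hmj
    obtain ⟨k, hk, hmk⟩ := Set.mem_iUnion₂.1 (hT.seg_subset_biUnion u (by omega) hm)
    rw [Set.mem_Ico] at hk
    obtain rfl | hk' := eq_or_lt_of_le hk.1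
    · obtain rfl | hj := eq_or_lt_of_le hij
      · exact Set.eq_empty_iff_forall_notMem.1 (h3 i hjn) m ⟨⟨hmi, hmk⟩, hmj⟩
      · exact Set.disjoint_left.1 (ih _ (by omega) (by omega) hjn rfl) hmk hmj
    · exact Set.disjoint_left.1 (ih _ (by omega) (by omega) (by omega) rfl) hmi hmk

theorem backtracking_lemma_general {V : Type*} {T : SimpleGraph V} (hT : T.IsTree)
    (n : ℕ) (u : ℕ → V)
    (h3 : ∀ i, 1 ≤ i → i + 2 ≤ n →
      seg hT (u (i - 1)) (u i) ∩ seg hT (u i) (u (i + 1)) ∩ seg hT (u (i + 1)) (u (i + 2)) = ∅) :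
    ∀ i j, 1 ≤ i → 1 ≤ j → i ≤ n → j ≤ n → (i + 2 ≤ j ∨ j + 2 ≤ i) →
      Disjoint (seg hT (u (i - 1)) (u i)) (seg hT (u (j - 1)) (u j)) := by
  have h3' : ∀ i, i + 3 ≤ n →
      seg hT (u i) (u (i + 1)) ∩ seg hT (u (i + 1)) (u (i + 2)) ∩
        seg hT (u (i + 2)) (u (i + 3)) = ∅ :=
    fun i hi => by simpa using h3 (i + 1) (by omega) (by omega)
  intro i j hi hj hin hjn hij
  obtain ⟨i, rfl⟩ : ∃ i', i = i' + 1 := ⟨i - 1, by omega⟩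
  obtain ⟨j, rfl⟩ : ∃ j', j = j' + 1 := ⟨j - 1, by omega⟩
  simp only [Nat.add_sub_cancel]
  rcases hij with hij | hij
  · exact disjoint_seg_of_add_two_le hT h3' (by omega) hjn
  · exact (disjoint_seg_of_add_two_le hT h3' (by omega) hin).symm

/-- Backtracking lemma: under the three hypotheses, arcs whose indices differ by
at least `2` are disjoint. -/
theorem backtracking_lemma {V : Type*} {T : SimpleGraph V} (hT : T.IsTree)
    (n : ℕ) (u : ℕ → V)
    (h1 : ∀ i, i < n → u i ≠ u (i + 1))
    (h2 : ∀ i, 1 ≤ i → i < n →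
      seg hT (u (i - 1)) (u i) ∩ seg hT (u i) (u (i + 1)) ⊂ seg hT (u (i - 1)) (u i) ∧
      seg hT (u (i - 1)) (u i) ∩ seg hT (u i) (u (i + 1)) ⊂ seg hT (u i) (u (i + 1)))
    (h3 : ∀ i, 1 ≤ i → i + 2 ≤ n →
      seg hT (u (i - 1)) (u i) ∩ seg hT (u i) (u (i + 1)) ∩ seg hT (u (i + 1)) (u (i + 2)) = ∅) :
    ∀ i j, 1 ≤ i → 1 ≤ j → i ≤ n → j ≤ n → (i + 2 ≤ j ∨ j + 2 ≤ i) →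
      Disjoint (seg hT (u (i - 1)) (u i)) (seg hT (u (j - 1)) (u j)) :=
  backtracking_lemma_general hT n u h3
end

section
/- Let u_0, …, u_n (n ≥ 2) be points of a tree satisfying the hypotheses of the backtracking lemma: consecutive points are distinct, [u_{i−1}, u_i] ∩ [u_i, u_{i+1}] is strictly contained in each of the two arcs, and triple intersections of three consecutive arcs are empty. Let C_i denote the convex hull of {u_0, …, u_i}. Then for every 1 ≤ i ≤ n−1: u_{i+1} ∉ C_i and [u_i, u_{i+1}] ∩ C_{i−1} = ∅. -/
open SimpleGraph

/-- The convex hull of a set of vertices in a tree: the smallest subtree containing it. -/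
def treeHull {V : Type*} {T : SimpleGraph V} (hT : T.IsTree) (S : Set V) : Set V :=
  ⋂₀ {C : Set V | S ⊆ C ∧ IsSubtree hT C}

namespace Backtrack

variable {V : Type*} {T : SimpleGraph V} (hT : T.IsTree)

lemma seg_eq {a b : V} (p : T.Walk a b) (hp : p.IsPath) :
    seg hT a b = {z | z ∈ p.support} := by
  have h := hT.existsUnique_path a b
  have : h.exists.choose = p := h.unique h.exists.choose_spec hp
  rw [seg, this]

lemma mem_seg_left (a b : V) : a ∈ seg hT a b := Walk.start_mem_support _

lemma mem_seg_right (a b : V) : b ∈ seg hT a b := Walk.end_mem_support _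

lemma seg_subset_support {a b : V} (w : T.Walk a b) :
    seg hT a b ⊆ {z | z ∈ w.support} := by
  classical
  rw [seg_eq hT w.bypass w.bypass_isPath]
  exact fun z hz => w.support_bypass_subset hz

lemma seg_symm (a b : V) : seg hT a b = seg hT b a := by
  set p := (hT.existsUnique_path a b).exists.choose with hp
  have hpp : p.IsPath := (hT.existsUnique_path a b).exists.choose_spec
  rw [seg_eq hT p.reverse hpp.reverse]
  ext z
  simp [seg, Walk.support_reverse, ← hp]

lemma seg_subset_union (a c b : V) : seg hT a b ⊆ seg hT a c ∪ seg hT c b := by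
  set p := (hT.existsUnique_path a c).exists.choose with hp
  set q := (hT.existsUnique_path c b).exists.choose with hq
  intro z hz
  have := seg_subset_support hT (p.append q) hz
  rw [Set.mem_setOf_eq, Walk.mem_support_append_iff] at this
  exact this

lemma seg_subset_of_mem_left {a b m : V} (h : m ∈ seg hT a b) :
    seg hT a m ⊆ seg hT a b := by
  classical
  set p := (hT.existsUnique_path a b).exists.choose with hp
  have hpp : p.IsPath := (hT.existsUnique_path a b).exists.choose_spec
  have hm : m ∈ p.support := h
  rw [seg_eq hT (p.takeUntil m hm) (hpp.takeUntil hm)]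
  exact fun z hz => Walk.support_takeUntil_subset p hm hz

lemma seg_subset_of_mem_right {a b m : V} (h : m ∈ seg hT a b) :
    seg hT m b ⊆ seg hT a b := by
  rw [seg_symm hT m b, seg_symm hT a b]
  exact seg_subset_of_mem_left hT (by rwa [seg_symm hT b a])

lemma seg_isSubtree (a b : V) : IsSubtree hT (seg hT a b) := by
  intro x hx y hy z hz
  rcases seg_subset_union hT x a y hz with hz1 | hz1
  · exact seg_subset_of_mem_left hT hx (by rwa [seg_symm hT x a] at hz1)
  · exact seg_subset_of_mem_left hT hy hz1

lemma seg_self (a : V) : seg hT a a = {a} := by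
  rw [seg_eq hT Walk.nil Walk.IsPath.nil]
  ext z; simp

lemma subset_treeHull (S : Set V) : S ⊆ treeHull hT S :=
  fun z hz C hC => hC.1 hz

lemma treeHull_isSubtree (S : Set V) : IsSubtree hT (treeHull hT S) := by
  intro x hx y hy z hz C hC
  exact hC.2 x (hx C hC) y (hy C hC) hz

lemma treeHull_min {S C : Set V} (h1 : S ⊆ C) (h2 : IsSubtree hT C) :
    treeHull hT S ⊆ C := fun z hz => hz C ⟨h1, h2⟩

lemma treeHull_singleton (x : V) : treeHull hT {x} = {x} := by
  apply Set.Subset.antisymm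
  · apply treeHull_min hT (le_refl _)
    intro a ha b hb
    rw [Set.mem_singleton_iff] at ha hb
    subst ha; subst hb
    rw [seg_self]
  · exact subset_treeHull hT _

lemma treeHull_insert {S : Set V} {x y : V} (hy : y ∈ treeHull hT S) :
    treeHull hT (insert x S) = treeHull hT S ∪ seg hT y x := by
  apply Set.Subset.antisymm
  · apply treeHull_min hT
    · intro z hz
      rcases hz with rfl | hz
      · exact Or.inr (mem_seg_right hT y z)
      · exact Or.inl (subset_treeHull hT S hz)
    · rintro p (hp | hp) q (hq | hq) z hz
      · exact Or.inl (treeHull_isSubtree hT S p hp q hq hz)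
      · rcases seg_subset_union hT p y q hz with h | h
        · exact Or.inl (treeHull_isSubtree hT S p hp y hy h)
        · exact Or.inr (seg_subset_of_mem_left hT hq h)
      · rcases seg_subset_union hT p y q hz with h | h
        · exact Or.inr (seg_subset_of_mem_left hT hp (by rwa [seg_symm hT p y] at h))
        · exact Or.inl (treeHull_isSubtree hT S y hy q hq h)
      · exact Or.inr (seg_isSubtree hT y x p hp q hq hz)
  · apply Set.union_subset
    · exact treeHull_min hT (fun z hz => subset_treeHull hT _ (Set.mem_insert_of_mem x hz))
        (treeHull_isSubtree hT _)
    · apply treeHull_isSubtree hT (insert x S) y _ x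
        (subset_treeHull hT _ (Set.mem_insert x S))
      exact treeHull_min hT (fun z hz => subset_treeHull hT _ (Set.mem_insert_of_mem x hz))
        (treeHull_isSubtree hT _) hy

/-- Along a walk, there is a last point belonging to a set `S` (if any point does). -/
lemma exists_last {a b : V} (w : T.Walk a b) (S : Set V) (h : ∃ x ∈ w.support, x ∈ S) :
    ∃ m, ∃ w₂ : T.Walk m b, m ∈ S ∧ m ∈ w.support ∧
      (∀ x ∈ w₂.support, x ∈ w.support) ∧ (∀ x ∈ w₂.support, x ∈ S → x = m) ∧
      (w.IsPath → w₂.IsPath) := by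
  induction w with
  | nil =>
    obtain ⟨x, hx, hxS⟩ := h
    rw [Walk.support_nil, List.mem_singleton] at hx
    subst hx
    exact ⟨x, Walk.nil, hxS, by simp, by simp, by simp, fun _ => Walk.IsPath.nil⟩
  | @cons c d e hadj q ih =>
    by_cases hq : ∃ x ∈ q.support, x ∈ S
    · obtain ⟨m, w₂, hmS, hm, hsub, hlast, hpath⟩ := ih hq
      refine ⟨m, w₂, hmS, ?_, ?_, hlast, ?_⟩
      · rw [Walk.support_cons]; exact List.mem_cons_of_mem c hm
      · intro x hx; rw [Walk.support_cons]; exact List.mem_cons_of_mem c (hsub x hx)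
      · intro hp; exact hpath ((Walk.cons_isPath_iff hadj q).mp hp).1
    · obtain ⟨x, hx, hxS⟩ := h
      rw [Walk.support_cons, List.mem_cons] at hx
      have hxc : x = c := by
        rcases hx with h' | h'
        · exact h'
        · exact absurd ⟨x, h', hxS⟩ hq
      subst hxc
      refine ⟨x, Walk.cons hadj q, hxS, Walk.start_mem_support _, fun y hy => hy, ?_, fun hp => hp⟩
      intro y hy hyS
      rw [Walk.support_cons, List.mem_cons] at hy
      rcases hy with h' | h'
      · exact h'
      · exact absurd ⟨y, h', hyS⟩ hq

/-- Existence of the median of three points in a tree. -/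
lemma median (a b c : V) : ∃ m, m ∈ seg hT a b ∧ m ∈ seg hT a c ∧ m ∈ seg hT b c := by
  classical
  set p := (hT.existsUnique_path a b).exists.choose with hpdef
  have hpp : p.IsPath := (hT.existsUnique_path a b).exists.choose_spec
  obtain ⟨m, w₂, hmS, hm, hsub, hlast, hpath⟩ :=
    exists_last p (seg hT a c) ⟨a, Walk.start_mem_support _, mem_seg_left hT a c⟩
  have hw₂ : w₂.IsPath := hpath hpp
  have hmab : m ∈ seg hT a b := hm
  set q := (hT.existsUnique_path m c).exists.choose with hqdef
  have hqq : q.IsPath := (hT.existsUnique_path m c).exists.choose_spec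
  have hqseg : ∀ x, x ∈ q.support ↔ x ∈ seg hT m c := fun x => Iff.rfl
  have hmc_sub : seg hT m c ⊆ seg hT a c := seg_subset_of_mem_right hT hmS
  have hW : (w₂.reverse.append q).IsPath := by
    rw [Walk.isPath_def, Walk.support_append]
    have htail : q.support = m :: q.support.tail := q.support_eq_cons
    have hnd : q.support.tail.Nodup ∧ m ∉ q.support.tail := by
      have := hqq.support_nodup
      rw [htail, List.nodup_cons] at this
      exact ⟨this.2, this.1⟩
    apply List.Nodup.append
    · rw [← Walk.isPath_def]; exact hw₂.reverse
    · exact hnd.1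
    · intro x hx hx'
      rw [Walk.support_reverse, List.mem_reverse] at hx
      have hxq : x ∈ q.support := by rw [htail]; exact List.mem_cons_of_mem m hx'
      have hxac : x ∈ seg hT a c := hmc_sub ((hqseg x).mp hxq)
      have : x = m := hlast x hx hxac
      subst this
      exact hnd.2 hx'
  refine ⟨m, hmab, hmS, ?_⟩
  rw [seg_eq hT (w₂.reverse.append q) hW]
  show m ∈ (w₂.reverse.append q).support
  rw [Walk.mem_support_append_iff]
  exact Or.inr (Walk.start_mem_support q)

end Backtrack

open Backtrack


/-- Key induction of the backtracking lemma: `u_{i+1}` is not in the convex hull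
`C_i` of `u_0, …, u_i`, and `[u_i, u_{i+1}]` misses `C_{i-1}`. -/
theorem backtracking_induction {V : Type*} {T : SimpleGraph V} (hT : T.IsTree)
    (n : ℕ) (hn : 2 ≤ n) (u : ℕ → V)
    (h1 : ∀ i, i < n → u i ≠ u (i + 1))
    (h2 : ∀ i, 1 ≤ i → i < n →
      seg hT (u (i - 1)) (u i) ∩ seg hT (u i) (u (i + 1)) ⊂ seg hT (u (i - 1)) (u i) ∧
      seg hT (u (i - 1)) (u i) ∩ seg hT (u i) (u (i + 1)) ⊂ seg hT (u i) (u (i + 1)))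
    (h3 : ∀ i, 1 ≤ i → i + 2 ≤ n →
      seg hT (u (i - 1)) (u i) ∩ seg hT (u i) (u (i + 1)) ∩ seg hT (u (i + 1)) (u (i + 2)) = ∅)
    (C : ℕ → Set V) (hC : ∀ i, C i = treeHull hT {v | ∃ k ≤ i, v = u k}) :
    ∀ i, 1 ≤ i → i + 1 ≤ n →
      u (i + 1) ∉ C i ∧ seg hT (u i) (u (i + 1)) ∩ C (i - 1) = ∅ := by
  have hCsucc : ∀ i, C (i + 1) = C i ∪ seg hT (u i) (u (i + 1)) := by
    intro i
    rw [hC (i + 1), hC i]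
    have hset : {v | ∃ k ≤ i + 1, v = u k} = insert (u (i + 1)) {v | ∃ k ≤ i, v = u k} := by
      ext v
      simp only [Set.mem_setOf_eq, Set.mem_insert_iff]
      constructor
      · rintro ⟨k, hk, rfl⟩
        rcases Nat.lt_or_ge k (i + 1) with h | h
        · exact Or.inr ⟨k, by omega, rfl⟩
        · have : k = i + 1 := by omega
          subst this; exact Or.inl rfl
      · rintro (rfl | ⟨k, hk, rfl⟩)
        · exact ⟨i + 1, le_refl _, rfl⟩
        · exact ⟨k, by omega, rfl⟩
    rw [hset]
    exact treeHull_insert hT (subset_treeHull hT _ ⟨i, le_refl _, rfl⟩)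
  have hC0 : C 0 = {u 0} := by
    rw [hC 0]
    have : {v | ∃ k ≤ 0, v = u k} = {u 0} := by
      ext v; simp [Nat.le_zero]
    rw [this, treeHull_singleton]
  have hCmem : ∀ i, u i ∈ C i := by
    intro i; rw [hC i]; exact subset_treeHull hT _ ⟨i, le_refl _, rfl⟩
  have hCsub : ∀ i, IsSubtree hT (C i) := by
    intro i; rw [hC i]; exact treeHull_isSubtree hT _
  have key : ∀ i, 1 ≤ i → i + 1 ≤ n → seg hT (u i) (u (i + 1)) ∩ C (i - 1) = ∅ := by
    intro i
    induction i with
    | zero => intro h; omega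
    | succ j ih =>
      intro _ hjn
      simp only [Nat.add_sub_cancel]
      rcases Nat.eq_zero_or_pos j with rfl | hj1
      · -- base case i = 1
        simp only [Nat.zero_add] at hjn ⊢
        rw [hC0]
        ext z
        simp only [Set.mem_inter_iff, Set.mem_empty_iff_false, iff_false, not_and,
          Set.mem_singleton_iff]
        intro hz hz0
        subst hz0
        have hsub : seg hT (u 0) (u 1) ⊆ seg hT (u 1) (u 2) :=
          seg_isSubtree hT (u 1) (u 2) (u 0) hz (u 1) (mem_seg_left hT _ _)
        have hss := (h2 1 (le_refl _) (by omega)).1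
        simp only [Nat.sub_self] at hss
        exact hss.not_subset fun w hw => ⟨hw, hsub hw⟩
      · obtain ⟨j', rfl⟩ : ∃ j', j = j' + 1 := ⟨j - 1, by omega⟩
        have ihP : seg hT (u (j' + 1)) (u (j' + 2)) ∩ C j' = ∅ := by
          have := ih (by omega) (by omega)
          simpa using this
        have h3' := h3 (j' + 1) (by omega) (by omega)
        simp only [Nat.add_sub_cancel] at h3'
        -- (a) : S_{j+1} ∩ S_{j-1} = ∅
        have ha : ∀ z, z ∈ seg hT (u (j' + 2)) (u (j' + 3)) → z ∉ seg hT (u j') (u (j' + 1)) := by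
          intro z hz hz'
          obtain ⟨m, hm1, hm2, hm3⟩ := median hT (u (j' + 1)) (u (j' + 2)) z
          have hmA : m ∈ seg hT (u j') (u (j' + 1)) :=
            seg_isSubtree hT (u j') (u (j' + 1)) (u (j' + 1)) (mem_seg_right hT _ _) z hz' hm2
          have hmC : m ∈ seg hT (u (j' + 2)) (u (j' + 3)) :=
            seg_isSubtree hT (u (j' + 2)) (u (j' + 3)) (u (j' + 2)) (mem_seg_left hT _ _) z hz hm3
          have : m ∈ (∅ : Set V) := by
            rw [← h3']
            exact ⟨⟨hmA, hm1⟩, hmC⟩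
          exact this
        -- (b) : S_{j+1} ∩ C_{j-1} = ∅
        have hb : ∀ z, z ∈ seg hT (u (j' + 2)) (u (j' + 3)) → z ∉ C j' := by
          intro z hz hz'
          obtain ⟨m, hm1, hm2, hm3⟩ := median hT (u j') (u (j' + 2)) z
          have hmC : m ∈ C j' := hCsub j' (u j') (hCmem j') z hz' hm2
          have hmS : m ∈ seg hT (u (j' + 2)) (u (j' + 3)) :=
            seg_isSubtree hT (u (j' + 2)) (u (j' + 3)) (u (j' + 2)) (mem_seg_left hT _ _) z hz hm3
          rcases seg_subset_union hT (u j') (u (j' + 1)) (u (j' + 2)) hm1 with h | h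
          · exact ha m hmS h
          · have : m ∈ seg hT (u (j' + 1)) (u (j' + 2)) ∩ C j' := ⟨h, hmC⟩
            rw [ihP] at this
            exact this
        ext z
        simp only [Set.mem_inter_iff, Set.mem_empty_iff_false, iff_false, not_and]
        intro hz hz'
        rw [hCsucc j'] at hz'
        rcases hz' with h | h
        · exact hb z hz h
        · exact ha z hz h
  intro i hi hin
  obtain ⟨i', rfl⟩ : ∃ i', i = i' + 1 := ⟨i - 1, by omega⟩
  have hkey := key (i' + 1) hi hin
  simp only [Nat.add_sub_cancel] at hkey ⊢
  refine ⟨?_, hkey⟩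
  rw [hCsucc i']
  rintro (h | h)
  · have : u (i' + 1 + 1) ∈ seg hT (u (i' + 1)) (u (i' + 1 + 1)) ∩ C i' :=
      ⟨mem_seg_right hT _ _, h⟩
    rw [hkey] at this
    exact this
  · have hsub : seg hT (u (i' + 1)) (u (i' + 2)) ⊆
        seg hT (u i') (u (i' + 1)) ∩ seg hT (u (i' + 1)) (u (i' + 2)) := by
      intro w hw
      exact ⟨seg_isSubtree hT (u i') (u (i' + 1)) (u (i' + 1)) (mem_seg_right hT _ _)
        (u (i' + 2)) h hw, hw⟩
    have hss := (h2 (i' + 1) (by omega) (by omega)).2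
    simp only [Nat.add_sub_cancel] at hss
    exact hss.not_subset hsub
end
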